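/- Under the hypotheses of the nonlocal Korn inequality, for all u ∈ C_c^∞(Ω;ℝⁿ): ∫_Ω∫_Ω A(x,x') ε_u(x):ε_u(x') dx'dx = ½ ∫_Ω∫_Ω A(x,x') ∇u(x):∇u(x') dx'dx + ½ ∫_Ω∫_Ω A(x,x') div u(x) div u(x') dx'dx. -/

import Mathlib

open MeasureTheory

noncomputable section

/-- The Jacobian matrix of a vector field on ℝⁿ. -/
def jac {n : ℕ} (u : EuclideanSpace ℝ (Fin n) → EuclideanSpace ℝ (Fin n))
    (x : EuclideanSpace ℝ (Fin n)) : Matrix (Fin n) (Fin n) ℝ :=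
  fun k m => fderiv ℝ u x (EuclideanSpace.single m 1) k

/-- The symmetrized gradient (linearized strain) of a vector field. -/
def symGrad {n : ℕ} (u : EuclideanSpace ℝ (Fin n) → EuclideanSpace ℝ (Fin n))
    (x : EuclideanSpace ℝ (Fin n)) : Matrix (Fin n) (Fin n) ℝ :=
  fun k m => (jac u x k m + jac u x m k) / 2

/-- The Frobenius inner product of two matrices. -/
def frob {n : ℕ} (A B : Matrix (Fin n) (Fin n) ℝ) : ℝ := ∑ k, ∑ m, A k m * B k m

/-- Smooth compactly supported vector field with support inside Ω. -/
def IsTestVF {n : ℕ} (Ω : Set (EuclideanSpace ℝ (Fin n)))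
    (u : EuclideanSpace ℝ (Fin n) → EuclideanSpace ℝ (Fin n)) : Prop :=
  ContDiff ℝ (⊤ : ℕ∞) u ∧ HasCompactSupport u ∧ tsupport u ⊆ Ω

/-- Smooth compactly supported scalar test function on the product domain Ω×Ω. -/
def IsTestProd {n : ℕ} (Ω : Set (EuclideanSpace ℝ (Fin n)))
    (φ : EuclideanSpace ℝ (Fin n) × EuclideanSpace ℝ (Fin n) → ℝ) : Prop :=
  ContDiff ℝ (⊤ : ℕ∞) φ ∧ HasCompactSupport φ ∧ tsupport φ ⊆ Ω ×ˢ Ω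


def divg {n : ℕ} (u : EuclideanSpace ℝ (Fin n) → EuclideanSpace ℝ (Fin n))
    (x : EuclideanSpace ℝ (Fin n)) : ℝ := ∑ k, jac u x k k

section Helpers
variable {n : ℕ}

local notation "E" => EuclideanSpace ℝ (Fin n)

lemma coord_hasFDerivAt (u : E → E) (hud : Differentiable ℝ u) (k : Fin n) (x : E) :
    HasFDerivAt (fun x => u x k) ((EuclideanSpace.proj k).comp (fderiv ℝ u x)) x :=
  by have h := (EuclideanSpace.proj k).hasFDerivAt.comp x (hud x).hasFDerivAt; exact h

lemma fderiv_coord (u : E → E) (hud : Differentiable ℝ u) (k m : Fin n) (x : E) :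
    fderiv ℝ (fun x => u x k) x (EuclideanSpace.single m 1) = jac u x k m := by
  rw [(coord_hasFDerivAt u hud k x).fderiv]
  rfl

lemma jacFun_eq (u : E → E) (m k : Fin n) :
    (fun y => jac u y m k)
      = fun y => ((EuclideanSpace.proj m).comp
          (ContinuousLinearMap.apply ℝ E (EuclideanSpace.single k 1))) (fderiv ℝ u y) := rfl

lemma jacFun_contDiff (u : E → E) (husm : ContDiff ℝ (⊤ : ℕ∞) u) (m k : Fin n) :
    ContDiff ℝ (⊤ : ℕ∞) (fun y => jac u y m k) := by
  rw [jacFun_eq]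
  exact ((EuclideanSpace.proj m).comp
    (ContinuousLinearMap.apply ℝ E (EuclideanSpace.single k 1))).contDiff.comp
    (husm.fderiv_right (m := ((⊤ : ℕ∞) : WithTop ℕ∞)) (by exact_mod_cast (le_top : (⊤ : ℕ∞) + 1 ≤ ⊤)))

lemma jacFun_hasFDerivAt (u : E → E) (husm : ContDiff ℝ (⊤ : ℕ∞) u) (m k : Fin n) (y : E) :
    HasFDerivAt (fun y => jac u y m k)
      (((EuclideanSpace.proj m).comp
          (ContinuousLinearMap.apply ℝ E (EuclideanSpace.single k 1))).comp
        (fderiv ℝ (fderiv ℝ u) y)) y := by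
  rw [jacFun_eq]
  exact (((EuclideanSpace.proj m).comp
    (ContinuousLinearMap.apply ℝ E (EuclideanSpace.single k 1))).hasFDerivAt).comp y
    (((husm.fderiv_right (m := 1) (WithTop.coe_le_coe.mpr le_top)).differentiable one_ne_zero) y).hasFDerivAt

lemma fderiv_jacFun (u : E → E) (husm : ContDiff ℝ (⊤ : ℕ∞) u) (m k q : Fin n) (y : E) :
    fderiv ℝ (fun y => jac u y m k) y (EuclideanSpace.single q 1)
      = fderiv ℝ (fderiv ℝ u) y (EuclideanSpace.single q 1) (EuclideanSpace.single k 1) m := by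
  rw [(jacFun_hasFDerivAt u husm m k y).fderiv]
  rfl

lemma schwarz (u : E → E) (husm : ContDiff ℝ (⊤ : ℕ∞) u) (y v w : E) :
    fderiv ℝ (fderiv ℝ u) y v w = fderiv ℝ (fderiv ℝ u) y w v :=
  second_derivative_symmetric (f' := fderiv ℝ u)
    (fun z => ((husm.differentiable (by simp)) z).hasFDerivAt)
    (((husm.fderiv_right (m := 1) (WithTop.coe_le_coe.mpr le_top)).differentiable one_ne_zero y).hasFDerivAt) v w

lemma fderiv_sep (f g : E → ℝ) (hf : Differentiable ℝ f) (hg : Differentiable ℝ g)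
    (p : E × E) (v w : E) :
    fderiv ℝ (fun p : E × E => f p.1 * g p.2) p (v, w)
      = fderiv ℝ f p.1 v * g p.2 + f p.1 * fderiv ℝ g p.2 w := by
  have h1 : HasFDerivAt (fun p : E × E => f p.1)
      ((fderiv ℝ f p.1).comp (ContinuousLinearMap.fst ℝ E E)) p :=
    (hf p.1).hasFDerivAt.comp p hasFDerivAt_fst
  have h2 : HasFDerivAt (fun p : E × E => g p.2)
      ((fderiv ℝ g p.2).comp (ContinuousLinearMap.snd ℝ E E)) p :=
    (hg p.2).hasFDerivAt.comp p hasFDerivAt_snd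
  have h := h1.mul h2
  rw [show (fun p : E × E => f p.1 * g p.2) = ((fun p : E × E => f p.1) * fun p => g p.2) from rfl,
    h.fderiv]
  simp only [ContinuousLinearMap.add_apply, ContinuousLinearMap.smul_apply,
    ContinuousLinearMap.coe_comp', Function.comp_apply, ContinuousLinearMap.coe_fst',
    ContinuousLinearMap.coe_snd', smul_eq_mul]
  ring

lemma tsupport_coord_subset (u : E → E) (k : Fin n) :
    tsupport (fun x => u x k) ⊆ tsupport u := by
  apply closure_mono
  intro x hx
  simp only [Function.mem_support] at hx ⊢
  exact fun h => hx (by rw [h]; rfl)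

lemma tsupport_jacFun_subset (u : E → E) (m k : Fin n) :
    tsupport (fun y => jac u y m k) ⊆ tsupport u := by
  refine subset_trans ?_ (tsupport_fderiv_subset ℝ (f := u))
  apply closure_mono
  intro y hy
  simp only [Function.mem_support] at hy ⊢
  exact fun h => hy (by unfold jac; rw [h]; rfl)

lemma tsupport_sep_subset (f g : E → ℝ) :
    tsupport (fun p : E × E => f p.1 * g p.2) ⊆ tsupport f ×ˢ tsupport g := by
  unfold tsupport
  rw [← closure_prod_eq]
  apply closure_mono
  intro p hp
  simp only [Function.mem_support] at hp
  constructor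
  · refine Function.mem_support.mpr ?_
    intro h
    exact hp (by rw [h, zero_mul])
  · refine Function.mem_support.mpr ?_
    intro h
    exact hp (by rw [h, mul_zero])

lemma isTestProd_sep (Ω : Set E) (f g : E → ℝ) (hf : ContDiff ℝ (⊤ : ℕ∞) f) (hg : ContDiff ℝ (⊤ : ℕ∞) g)
    (hfK : IsCompact (tsupport f)) (hgK : IsCompact (tsupport g))
    (hfΩ : tsupport f ⊆ Ω) (hgΩ : tsupport g ⊆ Ω) :
    IsTestProd Ω (fun p : E × E => f p.1 * g p.2) := by
  refine ⟨(hf.comp contDiff_fst).mul (hg.comp contDiff_snd), ?_, ?_⟩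
  · exact IsCompact.of_isClosed_subset (hfK.prod hgK) isClosed_closure
      (tsupport_sep_subset f g)
  · exact subset_trans (tsupport_sep_subset f g) (Set.prod_mono hfΩ hgΩ)

lemma cont_bound_sep (f g : E → ℝ) (hf : Continuous f) (hg : Continuous g)
    (hfK : IsCompact (tsupport f)) (hgK : IsCompact (tsupport g)) :
    ∃ C, ∀ p : E × E, ‖f p.1 * g p.2‖ ≤ C := by
  have : HasCompactSupport (fun p : E × E => f p.1 * g p.2) :=
    IsCompact.of_isClosed_subset (hfK.prod hgK) isClosed_closure (tsupport_sep_subset f g)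
  exact ((hf.comp continuous_fst).mul (hg.comp continuous_snd)).bounded_above_of_compact_support this

end Helpers

/-- Strain–gradient–divergence splitting identity. -/
theorem strain_energy_splitting_identity
    {n : ℕ} (hn : 2 ≤ n) (Ω : Set (EuclideanSpace ℝ (Fin n)))
    (hΩo : IsOpen Ω) (hΩb : Bornology.IsBounded Ω)
    (A : EuclideanSpace ℝ (Fin n) → EuclideanSpace ℝ (Fin n) → ℝ)
    (hA2 : MemLp (fun p : EuclideanSpace ℝ (Fin n) × EuclideanSpace ℝ (Fin n) => A p.1 p.2) 2
      ((volume.restrict Ω).prod (volume.restrict Ω)))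
    (hAsym : ∀ x y, A x y = A y x)
    -- positive definiteness of the kernel
    (hpd : ∀ φ : EuclideanSpace ℝ (Fin n) → ℝ, ContDiff ℝ (⊤ : ℕ∞) φ → HasCompactSupport φ →
      tsupport φ ⊆ Ω → 0 ≤ ∫ x in Ω, ∫ y in Ω, A x y * φ x * φ y)
    -- weak partial derivatives of A w.r.t. the first and second group of variables
    (D D' : Fin n → EuclideanSpace ℝ (Fin n) → EuclideanSpace ℝ (Fin n) → ℝ)
    (hDloc : ∀ k, LocallyIntegrableOn
      (fun p : EuclideanSpace ℝ (Fin n) × EuclideanSpace ℝ (Fin n) => D k p.1 p.2) (Ω ×ˢ Ω))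
    (hD'loc : ∀ k, LocallyIntegrableOn
      (fun p : EuclideanSpace ℝ (Fin n) × EuclideanSpace ℝ (Fin n) => D' k p.1 p.2) (Ω ×ˢ Ω))
    (hD : ∀ k, ∀ φ, IsTestProd Ω φ →
      ∫ p in Ω ×ˢ Ω, A p.1 p.2 *
          fderiv ℝ φ p (EuclideanSpace.single k 1, (0 : EuclideanSpace ℝ (Fin n)))
        = - ∫ p in Ω ×ˢ Ω, D k p.1 p.2 * φ p)
    (hD' : ∀ k, ∀ φ, IsTestProd Ω φ →
      ∫ p in Ω ×ˢ Ω, A p.1 p.2 *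
          fderiv ℝ φ p ((0 : EuclideanSpace ℝ (Fin n)), EuclideanSpace.single k 1)
        = - ∫ p in Ω ×ˢ Ω, D' k p.1 p.2 * φ p)
    (γ : ℝ) (hγ : γ ^ 2 = 1)
    (hrel : ∀ k, ∀ᵐ p ∂((volume.restrict Ω).prod (volume.restrict Ω)),
      D k p.1 p.2 = γ * D' k p.1 p.2)
    (u : EuclideanSpace ℝ (Fin n) → EuclideanSpace ℝ (Fin n)) (hu : IsTestVF Ω u) :
    ∫ x in Ω, ∫ y in Ω, A x y * frob (symGrad u x) (symGrad u y)
      = (1/2) * (∫ x in Ω, ∫ y in Ω, A x y * frob (jac u x) (jac u y))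
        + (1/2) * (∫ x in Ω, ∫ y in Ω, A x y * divg u x * divg u y) := by
  classical
  obtain ⟨husm, husupp, huΩ⟩ := hu
  have hud : Differentiable ℝ u := husm.differentiable (by simp)
  set μ : Measure (EuclideanSpace ℝ (Fin n)) := volume.restrict Ω with hμdef
  haveI hfin : IsFiniteMeasure μ :=
    ⟨by rw [hμdef, Measure.restrict_apply_univ]; exact hΩb.measure_lt_top⟩
  have hprodmeas : (volume : Measure (EuclideanSpace ℝ (Fin n) ×
      EuclideanSpace ℝ (Fin n))).restrict (Ω ×ˢ Ω) = μ.prod μ := by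
    rw [hμdef, Measure.volume_eq_prod, Measure.prod_restrict]
  have hAint : Integrable
      (fun p : EuclideanSpace ℝ (Fin n) × EuclideanSpace ℝ (Fin n) => A p.1 p.2)
      (μ.prod μ) := hA2.integrable one_le_two
  -- basic facts about coordinates and jacobian entries
  have hcs : ∀ k : Fin n, ContDiff ℝ (⊤ : ℕ∞) (fun x => u x k) :=
    fun k => contDiff_euclidean.mp husm k
  have hcK : ∀ k, IsCompact (tsupport (fun x => u x k)) :=
    fun k => IsCompact.of_isClosed_subset husupp isClosed_closure (tsupport_coord_subset u k)
  have hcΩ : ∀ k, tsupport (fun x => u x k) ⊆ Ω :=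
    fun k => (tsupport_coord_subset u k).trans huΩ
  have hjs : ∀ m k, ContDiff ℝ (⊤ : ℕ∞) (fun y => jac u y m k) := fun m k => jacFun_contDiff u husm m k
  have hjK : ∀ m k, IsCompact (tsupport (fun y => jac u y m k)) :=
    fun m k => IsCompact.of_isClosed_subset husupp isClosed_closure (tsupport_jacFun_subset u m k)
  have hjΩ : ∀ m k, tsupport (fun y => jac u y m k) ⊆ Ω :=
    fun m k => (tsupport_jacFun_subset u m k).trans huΩ
  have hjzero : ∀ a b (x : EuclideanSpace ℝ (Fin n)), x ∉ tsupport u → jac u x a b = 0 := by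
    intro a b x hx
    by_contra h
    exact hx (tsupport_jacFun_subset u a b (subset_closure (Function.mem_support.mpr h)))
  -- symmetrized gradient entries
  have hss : ∀ k m, ContDiff ℝ (⊤ : ℕ∞) (fun x => symGrad u x k m) :=
    fun k m => ((hjs k m).add (hjs m k)).div_const 2
  have hsK : ∀ k m, IsCompact (tsupport (fun x => symGrad u x k m)) := by
    intro k m
    refine IsCompact.of_isClosed_subset husupp isClosed_closure (closure_minimal ?_ isClosed_closure)
    intro x hx
    simp only [Function.mem_support] at hx
    by_contra hxt
    exact hx (by simp [symGrad, hjzero k m x hxt, hjzero m k x hxt])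
  -- integrability workhorse
  have hInt : ∀ g h : EuclideanSpace ℝ (Fin n) → ℝ, Continuous g → Continuous h →
      IsCompact (tsupport g) → IsCompact (tsupport h) →
      Integrable (fun p : EuclideanSpace ℝ (Fin n) × EuclideanSpace ℝ (Fin n) =>
        A p.1 p.2 * (g p.1 * h p.2)) (μ.prod μ) := by
    intro g h hg hh hgK hhK
    have hb := cont_bound_sep g h hg hh hgK hhK
    have hm : AEStronglyMeasurable
        (fun p : EuclideanSpace ℝ (Fin n) × EuclideanSpace ℝ (Fin n) => g p.1 * h p.2)
        (μ.prod μ) :=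
      ((hg.comp continuous_fst).mul (hh.comp continuous_snd)).aestronglyMeasurable
    exact (hAint.bdd_mul hm (Filter.Eventually.of_forall hb.choose_spec)).congr (Filter.Eventually.of_forall fun p => mul_comm _ _)
  -- turning iterated integrals of sums into sums of product integrals
  have hIter : ∀ (g h : Fin n × Fin n → EuclideanSpace ℝ (Fin n) → ℝ),
      (∀ i, Continuous (g i)) → (∀ i, Continuous (h i)) →
      (∀ i, IsCompact (tsupport (g i))) → (∀ i, IsCompact (tsupport (h i))) →
      (∫ x, ∫ y, ∑ i : Fin n × Fin n, A x y * (g i x * h i y) ∂μ ∂μ)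
        = ∑ i : Fin n × Fin n,
            ∫ p, A p.1 p.2 * (g i p.1 * h i p.2) ∂(μ.prod μ) := by
    intro g h hgc hhc hgK hhK
    have hint : ∀ i : Fin n × Fin n,
        Integrable (fun p : EuclideanSpace ℝ (Fin n) × EuclideanSpace ℝ (Fin n) =>
          A p.1 p.2 * (g i p.1 * h i p.2)) (μ.prod μ) :=
      fun i => hInt _ _ (hgc i) (hhc i) (hgK i) (hhK i)
    have hsum : Integrable (fun p : EuclideanSpace ℝ (Fin n) × EuclideanSpace ℝ (Fin n) =>
        ∑ i : Fin n × Fin n, A p.1 p.2 * (g i p.1 * h i p.2)) (μ.prod μ) :=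
      integrable_finset_sum _ fun i _ => hint i
    rw [MeasureTheory.integral_integral hsum, integral_finset_sum _ fun i _ => hint i]
  -- the key integration-by-parts identity
  have keyB : ∀ k m : Fin n,
      (∫ p, A p.1 p.2 * (jac u p.1 k m * jac u p.2 m k) ∂(μ.prod μ))
        = ∫ p, A p.1 p.2 * (jac u p.1 k k * jac u p.2 m m) ∂(μ.prod μ) := by
    intro k m
    have hφ : IsTestProd Ω (fun p : EuclideanSpace ℝ (Fin n) × EuclideanSpace ℝ (Fin n) =>
        u p.1 k * jac u p.2 m k) :=
      isTestProd_sep Ω _ _ (hcs k) (hjs m k) (hcK k) (hjK m k) (hcΩ k) (hjΩ m k)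
    have hχ : IsTestProd Ω (fun p : EuclideanSpace ℝ (Fin n) × EuclideanSpace ℝ (Fin n) =>
        u p.1 k * jac u p.2 m m) :=
      isTestProd_sep Ω _ _ (hcs k) (hjs m m) (hcK k) (hjK m m) (hcΩ k) (hjΩ m m)
    have hDφ := hD m _ hφ
    have hD'φ := hD' m _ hφ
    have hDχ := hD k _ hχ
    have hD'χ := hD' k _ hχ
    rw [hprodmeas] at hDφ hD'φ hDχ hD'χ
    have eφ1 : ∀ p : EuclideanSpace ℝ (Fin n) × EuclideanSpace ℝ (Fin n),
        fderiv ℝ (fun p : EuclideanSpace ℝ (Fin n) × EuclideanSpace ℝ (Fin n) =>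
            u p.1 k * jac u p.2 m k) p (EuclideanSpace.single m 1, 0)
          = jac u p.1 k m * jac u p.2 m k := by
      intro p
      rw [fderiv_sep _ _ ((hcs k).differentiable (by simp)) ((hjs m k).differentiable (by simp))]
      rw [fderiv_coord u hud k m p.1, ContinuousLinearMap.map_zero, mul_zero, add_zero]
    have eφ2 : ∀ p : EuclideanSpace ℝ (Fin n) × EuclideanSpace ℝ (Fin n),
        fderiv ℝ (fun p : EuclideanSpace ℝ (Fin n) × EuclideanSpace ℝ (Fin n) =>
            u p.1 k * jac u p.2 m k) p (0, EuclideanSpace.single m 1)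
          = u p.1 k * fderiv ℝ (fderiv ℝ u) p.2 (EuclideanSpace.single m 1)
              (EuclideanSpace.single k 1) m := by
      intro p
      rw [fderiv_sep _ _ ((hcs k).differentiable (by simp)) ((hjs m k).differentiable (by simp))]
      rw [ContinuousLinearMap.map_zero, zero_mul, zero_add, fderiv_jacFun u husm m k m p.2]
    have eχ1 : ∀ p : EuclideanSpace ℝ (Fin n) × EuclideanSpace ℝ (Fin n),
        fderiv ℝ (fun p : EuclideanSpace ℝ (Fin n) × EuclideanSpace ℝ (Fin n) =>
            u p.1 k * jac u p.2 m m) p (EuclideanSpace.single k 1, 0)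
          = jac u p.1 k k * jac u p.2 m m := by
      intro p
      rw [fderiv_sep _ _ ((hcs k).differentiable (by simp)) ((hjs m m).differentiable (by simp))]
      rw [fderiv_coord u hud k k p.1, ContinuousLinearMap.map_zero, mul_zero, add_zero]
    have eχ2 : ∀ p : EuclideanSpace ℝ (Fin n) × EuclideanSpace ℝ (Fin n),
        fderiv ℝ (fun p : EuclideanSpace ℝ (Fin n) × EuclideanSpace ℝ (Fin n) =>
            u p.1 k * jac u p.2 m m) p (0, EuclideanSpace.single k 1)
          = u p.1 k * fderiv ℝ (fderiv ℝ u) p.2 (EuclideanSpace.single k 1)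
              (EuclideanSpace.single m 1) m := by
      intro p
      rw [fderiv_sep _ _ ((hcs k).differentiable (by simp)) ((hjs m m).differentiable (by simp))]
      rw [ContinuousLinearMap.map_zero, zero_mul, zero_add, fderiv_jacFun u husm m m k p.2]
    have hrw2φ : (∫ p, D m p.1 p.2 * (u p.1 k * jac u p.2 m k) ∂(μ.prod μ))
        = γ * ∫ p, D' m p.1 p.2 * (u p.1 k * jac u p.2 m k) ∂(μ.prod μ) := by
      rw [← integral_const_mul]
      exact integral_congr_ae ((hrel m).mono fun p hp => by dsimp only; rw [hp]; ring)
    have hrw2χ : (∫ p, D k p.1 p.2 * (u p.1 k * jac u p.2 m m) ∂(μ.prod μ))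
        = γ * ∫ p, D' k p.1 p.2 * (u p.1 k * jac u p.2 m m) ∂(μ.prod μ) := by
      rw [← integral_const_mul]
      exact integral_congr_ae ((hrel k).mono fun p hp => by dsimp only; rw [hp]; ring)
    have chainφ : (∫ p, A p.1 p.2 * (jac u p.1 k m * jac u p.2 m k) ∂(μ.prod μ))
        = γ * ∫ p, A p.1 p.2 * (u p.1 k * fderiv ℝ (fderiv ℝ u) p.2
            (EuclideanSpace.single m 1) (EuclideanSpace.single k 1) m) ∂(μ.prod μ) := by
      have h1 : (∫ p, A p.1 p.2 * (jac u p.1 k m * jac u p.2 m k) ∂(μ.prod μ))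
          = ∫ p, A p.1 p.2 * fderiv ℝ (fun p : EuclideanSpace ℝ (Fin n) ×
              EuclideanSpace ℝ (Fin n) => u p.1 k * jac u p.2 m k) p
              (EuclideanSpace.single m 1, 0) ∂(μ.prod μ) :=
        integral_congr_ae (Filter.Eventually.of_forall fun p => by dsimp only; rw [eφ1 p])
      have h3 : (∫ p, A p.1 p.2 * fderiv ℝ (fun p : EuclideanSpace ℝ (Fin n) ×
              EuclideanSpace ℝ (Fin n) => u p.1 k * jac u p.2 m k) p
              (0, EuclideanSpace.single m 1) ∂(μ.prod μ))
          = ∫ p, A p.1 p.2 * (u p.1 k * fderiv ℝ (fderiv ℝ u) p.2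
              (EuclideanSpace.single m 1) (EuclideanSpace.single k 1) m) ∂(μ.prod μ) :=
        integral_congr_ae (Filter.Eventually.of_forall fun p => by dsimp only; rw [eφ2 p])
      rw [h1, hDφ, hrw2φ, ← h3, hD'φ]
      ring
    have chainχ : (∫ p, A p.1 p.2 * (jac u p.1 k k * jac u p.2 m m) ∂(μ.prod μ))
        = γ * ∫ p, A p.1 p.2 * (u p.1 k * fderiv ℝ (fderiv ℝ u) p.2
            (EuclideanSpace.single k 1) (EuclideanSpace.single m 1) m) ∂(μ.prod μ) := by
      have h1 : (∫ p, A p.1 p.2 * (jac u p.1 k k * jac u p.2 m m) ∂(μ.prod μ))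
          = ∫ p, A p.1 p.2 * fderiv ℝ (fun p : EuclideanSpace ℝ (Fin n) ×
              EuclideanSpace ℝ (Fin n) => u p.1 k * jac u p.2 m m) p
              (EuclideanSpace.single k 1, 0) ∂(μ.prod μ) :=
        integral_congr_ae (Filter.Eventually.of_forall fun p => by dsimp only; rw [eχ1 p])
      have h3 : (∫ p, A p.1 p.2 * fderiv ℝ (fun p : EuclideanSpace ℝ (Fin n) ×
              EuclideanSpace ℝ (Fin n) => u p.1 k * jac u p.2 m m) p
              (0, EuclideanSpace.single k 1) ∂(μ.prod μ))
          = ∫ p, A p.1 p.2 * (u p.1 k * fderiv ℝ (fderiv ℝ u) p.2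
              (EuclideanSpace.single k 1) (EuclideanSpace.single m 1) m) ∂(μ.prod μ) :=
        integral_congr_ae (Filter.Eventually.of_forall fun p => by dsimp only; rw [eχ2 p])
      rw [h1, hDχ, hrw2χ, ← h3, hD'χ]
      ring
    rw [chainφ, chainχ]
    congr 1
    exact integral_congr_ae (Filter.Eventually.of_forall fun p => by
      dsimp only
      rw [schwarz u husm p.2 (EuclideanSpace.single m 1) (EuclideanSpace.single k 1)])
  -- rewrite the three iterated integrals as sums of product integrals
  have eL : ∀ x y : EuclideanSpace ℝ (Fin n), A x y * frob (symGrad u x) (symGrad u y)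
      = ∑ i : Fin n × Fin n, A x y * (symGrad u x i.1 i.2 * symGrad u y i.1 i.2) := by
    intro x y
    rw [Fintype.sum_prod_type]
    simp only [frob, Finset.mul_sum]
  have eR1 : ∀ x y : EuclideanSpace ℝ (Fin n), A x y * frob (jac u x) (jac u y)
      = ∑ i : Fin n × Fin n, A x y * (jac u x i.1 i.2 * jac u y i.1 i.2) := by
    intro x y
    rw [Fintype.sum_prod_type]
    simp only [frob, Finset.mul_sum]
  have eR2 : ∀ x y : EuclideanSpace ℝ (Fin n), A x y * divg u x * divg u y
      = ∑ i : Fin n × Fin n, A x y * (jac u x i.1 i.1 * jac u y i.2 i.2) := by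
    intro x y
    rw [Fintype.sum_prod_type]
    simp only [divg, Finset.mul_sum, Finset.sum_mul, mul_assoc]
    exact Finset.sum_comm ..
  have hL : (∫ x, ∫ y, A x y * frob (symGrad u x) (symGrad u y) ∂μ ∂μ)
      = ∑ i : Fin n × Fin n,
          ∫ p, A p.1 p.2 * (symGrad u p.1 i.1 i.2 * symGrad u p.2 i.1 i.2) ∂(μ.prod μ) := by
    simp only [eL]
    exact hIter (fun i x => symGrad u x i.1 i.2) (fun i y => symGrad u y i.1 i.2)
      (fun i => (hss i.1 i.2).continuous) (fun i => (hss i.1 i.2).continuous)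
      (fun i => hsK i.1 i.2) (fun i => hsK i.1 i.2)
  have hR1 : (∫ x, ∫ y, A x y * frob (jac u x) (jac u y) ∂μ ∂μ)
      = ∑ i : Fin n × Fin n,
          ∫ p, A p.1 p.2 * (jac u p.1 i.1 i.2 * jac u p.2 i.1 i.2) ∂(μ.prod μ) := by
    simp only [eR1]
    exact hIter (fun i x => jac u x i.1 i.2) (fun i y => jac u y i.1 i.2)
      (fun i => (hjs i.1 i.2).continuous) (fun i => (hjs i.1 i.2).continuous)
      (fun i => hjK i.1 i.2) (fun i => hjK i.1 i.2)
  have hR2 : (∫ x, ∫ y, A x y * divg u x * divg u y ∂μ ∂μ)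
      = ∑ i : Fin n × Fin n,
          ∫ p, A p.1 p.2 * (jac u p.1 i.1 i.1 * jac u p.2 i.2 i.2) ∂(μ.prod μ) := by
    simp only [eR2]
    exact hIter (fun i x => jac u x i.1 i.1) (fun i y => jac u y i.2 i.2)
      (fun i => (hjs i.1 i.1).continuous) (fun i => (hjs i.2 i.2).continuous)
      (fun i => hjK i.1 i.1) (fun i => hjK i.2 i.2)
  -- expand the symmetrized integrand into four jacobian integrals
  have hexp : ∀ i : Fin n × Fin n,
      (∫ p, A p.1 p.2 * (symGrad u p.1 i.1 i.2 * symGrad u p.2 i.1 i.2) ∂(μ.prod μ))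
        = (1/4) * ((∫ p, A p.1 p.2 * (jac u p.1 i.1 i.2 * jac u p.2 i.1 i.2) ∂(μ.prod μ))
            + ((∫ p, A p.1 p.2 * (jac u p.1 i.1 i.2 * jac u p.2 i.2 i.1) ∂(μ.prod μ))
            + ((∫ p, A p.1 p.2 * (jac u p.1 i.2 i.1 * jac u p.2 i.1 i.2) ∂(μ.prod μ))
            + (∫ p, A p.1 p.2 * (jac u p.1 i.2 i.1 * jac u p.2 i.2 i.1) ∂(μ.prod μ))))) := by
    intro i
    obtain ⟨k, m⟩ := i
    dsimp only
    have hJ : ∀ a b c d : Fin n, Integrable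
        (fun p : EuclideanSpace ℝ (Fin n) × EuclideanSpace ℝ (Fin n) =>
          A p.1 p.2 * (jac u p.1 a b * jac u p.2 c d)) (μ.prod μ) :=
      fun a b c d => hInt _ _ (hjs a b).continuous (hjs c d).continuous (hjK a b) (hjK c d)
    have hptw : (fun p : EuclideanSpace ℝ (Fin n) × EuclideanSpace ℝ (Fin n) =>
          A p.1 p.2 * (symGrad u p.1 k m * symGrad u p.2 k m))
        = fun p => (1/4) * (A p.1 p.2 * (jac u p.1 k m * jac u p.2 k m)
            + (A p.1 p.2 * (jac u p.1 k m * jac u p.2 m k)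
            + (A p.1 p.2 * (jac u p.1 m k * jac u p.2 k m)
            + A p.1 p.2 * (jac u p.1 m k * jac u p.2 m k)))) := by
      funext p
      simp only [symGrad]
      ring
    have i34 : Integrable (fun p : EuclideanSpace ℝ (Fin n) × EuclideanSpace ℝ (Fin n) =>
        A p.1 p.2 * (jac u p.1 m k * jac u p.2 k m)
          + A p.1 p.2 * (jac u p.1 m k * jac u p.2 m k)) (μ.prod μ) :=
      (hJ m k k m).add (hJ m k m k)
    have i234 : Integrable (fun p : EuclideanSpace ℝ (Fin n) × EuclideanSpace ℝ (Fin n) =>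
        A p.1 p.2 * (jac u p.1 k m * jac u p.2 m k)
          + (A p.1 p.2 * (jac u p.1 m k * jac u p.2 k m)
            + A p.1 p.2 * (jac u p.1 m k * jac u p.2 m k))) (μ.prod μ) :=
      (hJ k m m k).add i34
    rw [hptw, integral_const_mul, integral_add (hJ k m k m) i234,
      integral_add (hJ k m m k) i34, integral_add (hJ m k k m) (hJ m k m k)]
  -- final assembly
  rw [hL, hR1, hR2]
  simp only [hexp]
  rw [← Finset.mul_sum, Finset.sum_add_distrib, Finset.sum_add_distrib, Finset.sum_add_distrib]
  have s1 : (∑ i : Fin n × Fin n,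
        ∫ p, A p.1 p.2 * (jac u p.1 i.2 i.1 * jac u p.2 i.2 i.1) ∂(μ.prod μ))
      = ∑ i : Fin n × Fin n,
          ∫ p, A p.1 p.2 * (jac u p.1 i.1 i.2 * jac u p.2 i.1 i.2) ∂(μ.prod μ) :=
    Fintype.sum_equiv (Equiv.prodComm _ _) _ _ (fun i => rfl)
  have s2 : (∑ i : Fin n × Fin n,
        ∫ p, A p.1 p.2 * (jac u p.1 i.2 i.1 * jac u p.2 i.1 i.2) ∂(μ.prod μ))
      = ∑ i : Fin n × Fin n,
          ∫ p, A p.1 p.2 * (jac u p.1 i.1 i.2 * jac u p.2 i.2 i.1) ∂(μ.prod μ) :=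
    Fintype.sum_equiv (Equiv.prodComm _ _) _ _ (fun i => rfl)
  have s3 : (∑ i : Fin n × Fin n,
        ∫ p, A p.1 p.2 * (jac u p.1 i.1 i.2 * jac u p.2 i.2 i.1) ∂(μ.prod μ))
      = ∑ i : Fin n × Fin n,
          ∫ p, A p.1 p.2 * (jac u p.1 i.1 i.1 * jac u p.2 i.2 i.2) ∂(μ.prod μ) :=
    Finset.sum_congr rfl fun i _ => keyB i.1 i.2
  rw [s1, s2, s3]
  ring
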